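/- Let δ = δ_0 + uδ_1 + ⋯ + u^{t−1}δ_{t−1} ∈ R^t be a unit such that δ_k ≠ 0 for some 1 ≤ k ≤ t−1, and let k be the smallest such index. Then in the ring R^{t,n}_δ = R^t[x]/⟨x^{np^s} − δ⟩, the ideal generated by (x^n − δ_{0,0})^{p^s} equals the ideal generated by u^k. -/

import Mathlib

open Polynomial

/-- The finite chain ring `R^t = 𝔽_{p^m}[u]/⟨u^t⟩`. -/
abbrev Rt (p m t : ℕ) [Fact p.Prime] : Type _ :=
  Polynomial (GaloisField p m) ⧸ Ideal.span {(X : Polynomial (GaloisField p m)) ^ t}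

/-- The canonical projection `𝔽_{p^m}[u] → R^t`. -/
noncomputable def mkRt (p m t : ℕ) [Fact p.Prime] :
    Polynomial (GaloisField p m) →+* Rt p m t :=
  Ideal.Quotient.mk _

/-- The element `u ∈ R^t`. -/
noncomputable def uRt (p m t : ℕ) [Fact p.Prime] : Rt p m t := mkRt p m t X

/-- The canonical embedding `𝔽_{p^m} → R^t`. -/
noncomputable def κ (p m t : ℕ) [Fact p.Prime] : GaloisField p m →+* Rt p m t :=
  (mkRt p m t).comp (C : GaloisField p m →+* Polynomial (GaloisField p m))

/-- The quotient ring `R^t[x]/⟨x^N − δ⟩`. -/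
abbrev Qr (p m t : ℕ) [Fact p.Prime] (N : ℕ) (δ : Rt p m t) : Type _ :=
  Polynomial (Rt p m t) ⧸ Ideal.span {(X : Polynomial (Rt p m t)) ^ N - C δ}

noncomputable instance (p m t : ℕ) [Fact p.Prime] (N : ℕ) (δ : Rt p m t) :
    CommRing (Qr p m t N δ) :=
  @Ideal.Quotient.commRing (Polynomial (Rt p m t)) _ _

/-- The canonical projection `R^t[x] → R^t[x]/⟨x^N − δ⟩`. -/
noncomputable def mkQr (p m t : ℕ) [Fact p.Prime] (N : ℕ) (δ : Rt p m t) :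
    Polynomial (Rt p m t) →+* Qr p m t N δ :=
  @Ideal.Quotient.mk (Polynomial (Rt p m t)) _ _ ⟨fun b ha => mul_comm b _ ▸ Ideal.mul_mem_left _ b ha⟩

/-! In characteristic `p` the Frobenius gives `(xⁿ − δ₀₀)^{p^s} = x^{np^s} − δ₀ = δ − δ₀` in
`R^{t,n}_δ`, and `δ − δ₀ = u^k (δ_k + uδ_{k+1} + ⋯)`, where the second factor is a unit of `R^t`
because its constant term `δ_k` is nonzero and `u` is nilpotent. -/

open Ideal

section TruncatedPolynomial

variable {R : Type*} [CommRing R]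

theorem isUnit_mk_span_X_pow_of_isUnit_coeff_zero (t : ℕ) {g : R[X]} (hg : IsUnit (g.coeff 0)) :
    IsUnit (Ideal.Quotient.mk (span {(X : R[X]) ^ t}) g) := by
  have hnil : IsNilpotent (Ideal.Quotient.mk (span {(X : R[X]) ^ t}) (X * g.divX)) :=
    ⟨t, by
      rw [← map_pow, Ideal.Quotient.eq_zero_iff_mem, mul_pow]
      exact mem_span_singleton.mpr (dvd_mul_right _ _)⟩
  rw [← X_mul_divX_add g, map_add]
  exact hnil.isUnit_add_right_of_commute ((hg.map C).map (Ideal.Quotient.mk _)) (Commute.all _ _)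

theorem charP_quotient_span_X_pow {K : Type*} [Field K] (p : ℕ) [CharP K p] {t : ℕ}
    (ht : t ≠ 0) : CharP (K[X] ⧸ span {(X : K[X]) ^ t}) p := by
  have : Nontrivial (K[X] ⧸ span {(X : K[X]) ^ t}) := by
    refine Ideal.Quotient.nontrivial_iff.mpr ?_
    rw [Ne, span_singleton_eq_top]
    exact fun h => not_isUnit_X (isUnit_of_dvd_unit (dvd_pow_self X ht) h)
  exact charP_of_injective_algebraMap (algebraMap K _).injective p

end TruncatedPolynomial

theorem Polynomial.sum_range_C_mul_X_pow_eq_C_add_X_pow_mul {R : Type*} [Semiring R]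
    (c : ℕ → R) {k t : ℕ} (hk : 1 ≤ k) (hkt : k ≤ t) (hc : ∀ j, 1 ≤ j → j < k → c j = 0) :
    ∑ i ∈ Finset.range t, C (c i) * X ^ i =
      C (c 0) + X ^ k * ∑ j ∈ Finset.range (t - k), C (c (k + j)) * X ^ j := by
  rw [← Finset.sum_range_add_sum_Ico _ hkt, Finset.sum_Ico_eq_sum_range, Finset.mul_sum,
    Finset.sum_eq_single_of_mem 0 (Finset.mem_range.mpr hk)]
  · simp only [pow_zero, mul_one]
    congr 1
    refine Finset.sum_congr rfl fun j _ => ?_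
    rw [pow_add, ((commute_X_pow _ k).symm).left_comm]
  · intro j hj hj0
    rw [hc j (Nat.one_le_iff_ne_zero.mpr hj0) (Finset.mem_range.mp hj), C_0, zero_mul]

theorem Polynomial.coeff_zero_sum_range_C_mul_X_pow {R : Type*} [Semiring R] (a : ℕ → R)
    {N : ℕ} (hN : 0 < N) : (∑ j ∈ Finset.range N, C (a j) * X ^ j).coeff 0 = a 0 := by
  simp [hN]

theorem mk_X_pow_sub_C_pow_expChar_pow {R : Type*} [CommRing R] (p : ℕ) [ExpChar R p]
    (n s : ℕ) (δ b : R) :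
    Ideal.Quotient.mk (span {(X : R[X]) ^ (n * p ^ s) - C δ}) (X ^ n - C b) ^ p ^ s =
      Ideal.Quotient.mk _ (C (δ - b ^ p ^ s)) := by
  rw [← map_pow, sub_pow_expChar_pow, ← pow_mul, ← C_pow, Ideal.Quotient.eq, C_sub]
  exact mem_span_singleton.mpr ⟨1, by ring⟩

theorem associated_uRt_pow_mkRt_sub_κ (p m t : ℕ) [Fact p.Prime] (δc : ℕ → GaloisField p m)
    {k : ℕ} (hk1 : 1 ≤ k) (hkt : k < t) (hδk : δc k ≠ 0)
    (hkmin : ∀ j, 1 ≤ j → j < k → δc j = 0) :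
    Associated (uRt p m t ^ k)
      (mkRt p m t (∑ i ∈ Finset.range t, C (δc i) * X ^ i) - κ p m t (δc 0)) := by
  rw [sum_range_C_mul_X_pow_eq_C_add_X_pow_mul δc hk1 hkt.le hkmin, map_add, κ,
    RingHom.comp_apply, add_sub_cancel_left, map_mul, map_pow]
  refine associated_mul_unit_right _ _
    (isUnit_mk_span_X_pow_of_isUnit_coeff_zero (R := GaloisField p m) t ?_)
  rw [coeff_zero_sum_range_C_mul_X_pow _ (by omega), add_zero]
  exact hδk.isUnit

theorem stmt_5_general (p m s t n : ℕ) [Fact p.Prime]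
    (δc : ℕ → GaloisField p m)
    (δ00 : GaloisField p m) (hδ00 : δ00 ^ p ^ s = δc 0)
    (k : ℕ) (hk1 : 1 ≤ k) (hkt : k ≤ t - 1) (hδk : δc k ≠ 0)
    (hkmin : ∀ j, 1 ≤ j → j < k → δc j = 0) :
    Ideal.span {(mkQr p m t (n * p ^ s)
        (mkRt p m t (∑ i ∈ Finset.range t, C (δc i) * X ^ i))
        (X ^ n - C (κ p m t δ00))) ^ p ^ s} =
    Ideal.span {mkQr p m t (n * p ^ s)
        (mkRt p m t (∑ i ∈ Finset.range t, C (δc i) * X ^ i))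
        (C (uRt p m t ^ k))} := by
  have : CharP (Rt p m t) p := charP_quotient_span_X_pow (K := GaloisField p m) p (by omega)
  obtain ⟨v, hv⟩ := associated_uRt_pow_mkRt_sub_κ p m t δc hk1 (by omega) hδk hkmin
  rw [mkQr, mk_X_pow_sub_C_pow_expChar_pow p, ← map_pow, hδ00, ← hv, C_mul, map_mul]
  exact span_singleton_mul_right_unit ((v.isUnit.map C).map _) _

/-- Let `δ = δ₀ + uδ₁ + ⋯ + u^{t-1}δ_{t-1} ∈ R^t` be a unit such that
`δ_k ≠ 0` for some `1 ≤ k ≤ t−1`, and let `k` be the smallest such index.  Then in the ring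
`R^{t,n}_δ = R^t[x]/⟨x^{np^s} − δ⟩` the ideal generated by `(xⁿ − δ_{0,0})^{p^s}` equals the
ideal generated by `u^k`. -/
theorem stmt_5 (p m s t n : ℕ) [Fact p.Prime] (hm : m ≠ 0) (ht : 1 ≤ t)
    (hn : 0 < n) (hnp : ¬ p ∣ n)
    (δc : ℕ → GaloisField p m) (hδ0 : δc 0 ≠ 0)
    (δ00 : GaloisField p m) (hδ00 : δ00 ^ p ^ s = δc 0)
    (k : ℕ) (hk1 : 1 ≤ k) (hkt : k ≤ t - 1) (hδk : δc k ≠ 0)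
    (hkmin : ∀ j, 1 ≤ j → j < k → δc j = 0) :
    Ideal.span {(mkQr p m t (n * p ^ s)
        (mkRt p m t (∑ i ∈ Finset.range t, C (δc i) * X ^ i))
        (X ^ n - C (κ p m t δ00))) ^ p ^ s} =
    Ideal.span {mkQr p m t (n * p ^ s)
        (mkRt p m t (∑ i ∈ Finset.range t, C (δc i) * X ^ i))
        (C (uRt p m t ^ k))} :=
  stmt_5_general p m s t n δc δ00 hδ00 k hk1 hkt hδk hkmin
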